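/- Assume K ≥ 2 and K·maxᵢ nᵢ ≥ 2, fix δ ∈ (0, 2], and set c_max := max over A ∈ S_K^L and x_A ∈ 𝒳^A with c_A(x_A) < ∞ of (1 + c_A(x_A)), η := (δ/2)/(2L log(C*Kn)), and δ' := (δ/2)/(2L c_max). Let {π*_A}_{A∈S_K^L} be a minimizer of F(π) := Σ_{A∈S_K^L} Σ_{x_A} (1 + c_A(x_A)) π_A(x_A) over families of nonnegative couplings vanishing wherever c_A = ∞ and satisfying Σ_{A∈S_K^L(i)} Pᵢ#π_A = μᵢ for all i (assumed to exist). Suppose g = (g₁,…,g_K) are potentials whose induced couplings π̃_A := π_A(g) satisfy Σ_{i=1}^K ‖μᵢ − Σ_{A∈S_K^L(i)} Pᵢ#π̃_A‖₁ ≤ δ', and suppose {π̂_A} is any family of nonnegative couplings vanishing wherever c_A = ∞ such that Σ_{A∈S_K^L(i)} Pᵢ#π̂_A = μᵢ for all i and Σ_{A∈S_K^L} ‖π̂_A − π̃_A‖₁ ≤ L Σ_{i=1}^K ‖Σ_{A∈S_K^L(i)} Pᵢ#π̃_A − μᵢ‖₁. Then F(π̂) ≤ F(π*) + δ, i.e.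 π̂ is a δ-approximate optimal solution of the truncated problem. -/

import Mathlib

open scoped ENNReal BigOperators

noncomputable section

/-- `S_K^L`: the nonempty subsets of `{1,…,K}` of size at most `L`. -/
def SKL (K L : ℕ) : Finset (Finset (Fin K)) :=
  Finset.univ.filter fun A => A.Nonempty ∧ A.card ≤ L

/-- `S_K^L(i)`: the members of `S_K^L` containing `i`. -/
def SKLi (K L : ℕ) (i : Fin K) : Finset (Finset (Fin K)) :=
  (SKL K L).filter fun A => i ∈ A

variable {K : ℕ} (𝒳 : Fin K → Type*) [∀ i, Fintype (𝒳 i)] [∀ i, DecidableEq (𝒳 i)]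

/-- The `i`-th marginal `Pᵢ#π_A` of a coupling `π_A` on `𝒳^A`
(zero when `i ∉ A`). -/
def marg (A : Finset (Fin K)) (π : ((j : A) → 𝒳 j.1) → ℝ) (i : Fin K) (xi : 𝒳 i) : ℝ :=
  if hi : i ∈ A then
    ∑ x : (j : A) → 𝒳 j.1, (if x ⟨i, hi⟩ = xi then π x else 0)
  else 0

/-- `Σ_{A ∈ S_K^L(i)} Pᵢ#π_A`, evaluated at `xi`. -/
def totMarg (L : ℕ) (π : (A : Finset (Fin K)) → ((j : A) → 𝒳 j.1) → ℝ)
    (i : Fin K) (xi : 𝒳 i) : ℝ :=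
  ∑ A ∈ SKLi K L i, marg 𝒳 A (π A) i xi

/-- The couplings `π_A(g)` induced by potentials `g`, interpreted as `0` where the
cost is `+∞`. -/
def piInd (η : ℝ) (c : (A : Finset (Fin K)) → ((j : A) → 𝒳 j.1) → ℝ≥0∞)
    (g : (i : Fin K) → 𝒳 i → ℝ) (A : Finset (Fin K)) (x : (j : A) → 𝒳 j.1) : ℝ :=
  if c A x = ⊤ then 0
  else Real.exp ((∑ j : A, g j.1 (x j) - (1 + (c A x).toReal)) / η)

/-- The dual objective `𝒢^L`. -/
def dualObj (η : ℝ) (L : ℕ) (c : (A : Finset (Fin K)) → ((j : A) → 𝒳 j.1) → ℝ≥0∞)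
    (μ : (i : Fin K) → 𝒳 i → ℝ) (g : (i : Fin K) → 𝒳 i → ℝ) : ℝ :=
  (∑ A ∈ SKL K L, ∑ x : (j : A) → 𝒳 j.1, piInd 𝒳 η c g A x)
    - (1 / η) * ∑ i : Fin K, ∑ xi : 𝒳 i, g i xi * μ i xi

/-- Unnormalized Kullback–Leibler divergence (convention `0 · log 0 = 0`). -/
def KLdiv {Z : Type*} [Fintype Z] (α β : Z → ℝ) : ℝ :=
  (∑ z, (β z - α z)) + ∑ z, α z * Real.log (α z / β z)

/-- ℓ¹ norm of a vector on a finite set. -/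
def l1 {Z : Type*} [Fintype Z] (v : Z → ℝ) : ℝ := ∑ z, |v z|

/-- `g : ℕ → potentials` is generated by the greedy Sinkhorn iteration: `g⁰ = 0`,
and at each step a coordinate `I` maximizing the KL-discrepancy of the `I`-th
marginal is updated by the Sinkhorn formula, all others kept fixed. -/
def IsGreedySinkhorn (η : ℝ) (L : ℕ)
    (c : (A : Finset (Fin K)) → ((j : A) → 𝒳 j.1) → ℝ≥0∞)
    (μ : (i : Fin K) → 𝒳 i → ℝ) (g : ℕ → (i : Fin K) → 𝒳 i → ℝ) : Prop :=
  (∀ i xi, g 0 i xi = 0) ∧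
  ∀ t : ℕ, ∃ I : Fin K,
    (∀ i : Fin K,
      KLdiv (μ i) (totMarg 𝒳 L (piInd 𝒳 η c (g t)) i) ≤
        KLdiv (μ I) (totMarg 𝒳 L (piInd 𝒳 η c (g t)) I)) ∧
    (∀ xI : 𝒳 I, g (t + 1) I xI =
      g t I xI + η * Real.log (μ I xI)
        - η * Real.log (totMarg 𝒳 L (piInd 𝒳 η c (g t)) I xI)) ∧
    (∀ i : Fin K, i ≠ I → g (t + 1) i = g t i)

/-- The marginal error `E_t` of the greedy Sinkhorn iteration. -/
def Err (η : ℝ) (L : ℕ) (c : (A : Finset (Fin K)) → ((j : A) → 𝒳 j.1) → ℝ≥0∞)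
    (μ : (i : Fin K) → 𝒳 i → ℝ) (g : ℕ → (i : Fin K) → 𝒳 i → ℝ) (t : ℕ) : ℝ :=
  ∑ i : Fin K,
    l1 (fun xi : 𝒳 i => μ i xi - totMarg 𝒳 L (piInd 𝒳 η c (g t)) i xi)

/-- `C* := maxᵢ nᵢ / n`. -/
def Cstar (n : ℝ) : ℝ := ((Finset.univ.sup fun i : Fin K => Fintype.card (𝒳 i) : ℕ) : ℝ) / n

/-- `min_{j, y} μ_j(y)`. -/
def muMin (μ : (i : Fin K) → 𝒳 i → ℝ) : ℝ :=
  sInf {v : ℝ | ∃ (j : Fin K) (y : 𝒳 j), v = μ j y}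

/-- `R̄ := L − η log min_{j,y} μ_j(y) + η L log(K C* n)`. -/
def Rbar (η : ℝ) (L : ℕ) (n : ℝ) (μ : (i : Fin K) → 𝒳 i → ℝ) : ℝ :=
  (L : ℝ) - η * Real.log (muMin 𝒳 μ) + η * L * Real.log (K * Cstar 𝒳 n * n)


/-- The linear objective `F(π) = Σ_{A∈S_K^L} Σ_{x_A} (1 + c_A(x_A)) π_A(x_A)`
(for couplings vanishing where `c_A = ∞`). -/
def Fobj (L : ℕ) (c : (A : Finset (Fin K)) → ((j : A) → 𝒳 j.1) → ℝ≥0∞)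
    (π : (A : Finset (Fin K)) → ((j : A) → 𝒳 j.1) → ℝ) : ℝ :=
  ∑ A ∈ SKL K L, ∑ x : (j : A) → 𝒳 j.1, (1 + (c A x).toReal) * π A x

/-- Feasibility for the truncated problem: nonnegative couplings vanishing wherever
`c_A = ∞`, with marginals `μ`. -/
def Feasible (L : ℕ) (c : (A : Finset (Fin K)) → ((j : A) → 𝒳 j.1) → ℝ≥0∞)
    (μ : (i : Fin K) → 𝒳 i → ℝ)
    (π : (A : Finset (Fin K)) → ((j : A) → 𝒳 j.1) → ℝ) : Prop :=
  (∀ A x, 0 ≤ π A x) ∧ (∀ A x, c A x = ⊤ → π A x = 0) ∧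
  (∀ (i : Fin K) (xi : 𝒳 i), totMarg 𝒳 L π i xi = μ i xi)

/-- `c_max := max over A ∈ S_K^L and x_A with c_A(x_A) < ∞ of (1 + c_A(x_A))`. -/
def cmax (L : ℕ) (c : (A : Finset (Fin K)) → ((j : A) → 𝒳 j.1) → ℝ≥0∞) : ℝ :=
  sSup {v : ℝ | ∃ A ∈ SKL K L, ∃ x : (j : A) → 𝒳 j.1,
    c A x ≠ ⊤ ∧ v = 1 + (c A x).toReal}

/-!
Write `ν` for the marginals of `π̃ = π(g)` and `e = Σᵢ ‖μᵢ - νᵢ‖₁ ≤ δ'`. Rounding `π̃` to `π̂`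
costs at most `c_max · L e`. Being a Gibbs coupling, `π̃` minimizes `F + η H`, with
`H(π) = Σ π (log π - 1)`, among all couplings with marginals `ν`. A competitor is built from `π*`
by scaling each cell by `∏ⱼ min(1, νⱼ/μⱼ)` and putting the missing mass on the singleton blocks
(where the cost is `1`); it costs at most `L e` more than `π*`, and `H ≤ 0` on it because its
entries are below `exp 1`. Comparing each cell of `π̃` with `exp (-1 - |A| log(K maxᵢ nᵢ))` gives
`-H(π̃) ≤ 2L log(C*Kn)`, so the entropic term costs at most `δ/2`, and the choice of `δ'` makes the
other two terms at most `δ/4` each. For `L = 1` every feasible coupling has `F = 1`.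
-/

open Finset

variable {𝒳} {L : ℕ}

lemma le_sum_sum_of_nonneg {ι : Type*} [Fintype ι] {Z : ι → Type*} [∀ i, Fintype (Z i)]
    {f : (i : ι) → Z i → ℝ} (hf : ∀ i z, 0 ≤ f i z) (i : ι) (z : Z i) :
    f i z ≤ ∑ i, ∑ z, f i z :=
  (single_le_sum (fun z _ => hf i z) (mem_univ z)).trans
    (single_le_sum (f := fun i => ∑ z, f i z) (fun i _ => sum_nonneg fun z _ => hf i z)
      (mem_univ i))

lemma l1_sub_comm {Z : Type*} [Fintype Z] (u v : Z → ℝ) :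
    l1 (fun z => u z - v z) = l1 (fun z => v z - u z) := by
  simp only [l1, abs_sub_comm]

lemma sum_sum_sub_le_sum_l1 {ι : Type*} [Fintype ι] {Z : ι → Type*} [∀ i, Fintype (Z i)]
    (μ ν : (i : ι) → Z i → ℝ) :
    ∑ i, ∑ xi, ν i xi - ∑ i, ∑ xi, μ i xi ≤ ∑ i, l1 (fun xi => μ i xi - ν i xi) := by
  simp only [l1, ← sum_sub_distrib]
  gcongr with i _ xi _
  exact (le_abs_self _).trans (abs_sub_comm _ _).le

lemma le_add_sum_l1 {ι : Type*} [Fintype ι] {Z : ι → Type*} [∀ i, Fintype (Z i)]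
    (μ ν : (i : ι) → Z i → ℝ) (i : ι) (xi : Z i) :
    ν i xi ≤ μ i xi + ∑ i, l1 (fun xi => μ i xi - ν i xi) := by
  have := le_sum_sum_of_nonneg (f := fun i xi => |μ i xi - ν i xi|) (fun _ _ => abs_nonneg _) i xi
  simp only [l1]
  linarith [neg_abs_le (μ i xi - ν i xi)]

lemma one_sub_sum_le_prod {ι : Type*} (s : Finset ι) {a : ι → ℝ} (h0 : ∀ i ∈ s, 0 ≤ a i)
    (h1 : ∀ i ∈ s, a i ≤ 1) : 1 - ∑ i ∈ s, (1 - a i) ≤ ∏ i ∈ s, a i := by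
  induction s using Finset.cons_induction with
  | empty => simp
  | cons j s hj ih =>
    rw [prod_cons, sum_cons]
    have ihs := ih (fun i hi => h0 i (mem_cons_of_mem hi)) (fun i hi => h1 i (mem_cons_of_mem hi))
    have hs : 0 ≤ ∑ i ∈ s, (1 - a i) :=
      sum_nonneg fun i hi => sub_nonneg.2 (h1 i (mem_cons_of_mem hi))
    nlinarith [h0 j (mem_cons_self j s), h1 j (mem_cons_self j s)]

lemma prod_le_of_mem {ι : Type*} [DecidableEq ι] {s : Finset ι} {a : ι → ℝ}
    (h0 : ∀ i ∈ s, 0 ≤ a i) (h1 : ∀ i ∈ s, a i ≤ 1) {i : ι} (hi : i ∈ s) :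
    ∏ j ∈ s, a j ≤ a i := by
  rw [← mul_prod_erase s a hi]
  exact mul_le_of_le_one_right (h0 i hi)
    (prod_le_one (fun j hj => h0 j (mem_of_mem_erase hj)) fun j hj => h1 j (mem_of_mem_erase hj))

lemma min_one_div_nonneg {m n : ℝ} (hm : 0 < m) (hn : 0 ≤ n) : 0 ≤ min 1 (n / m) :=
  le_min zero_le_one (div_nonneg hn hm.le)

lemma min_one_div_mul {m n : ℝ} (hm : 0 < m) : min 1 (n / m) * m = min m n := by
  rcases le_total n m with h | h
  · rw [min_eq_right ((div_le_one hm).2 h), min_eq_right h, div_mul_cancel₀ _ hm.ne']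
  · rw [min_eq_left ((one_le_div hm).2 h), min_eq_left h, one_mul]

lemma mul_log_sub_le {p q : ℝ} (hp : 0 < p) (hq : 0 ≤ q) :
    q * Real.log p - p ≤ q * Real.log q - q := by
  rcases hq.eq_or_lt with rfl | hq
  · simp [hp.le]
  · have h := Real.log_le_sub_one_of_pos (div_pos hp hq)
    rw [Real.log_div hp.ne' hq.ne', le_sub_iff_add_le, le_div_iff₀ hq] at h
    linarith

lemma mul_log_sub_one_nonpos {p : ℝ} (h0 : 0 ≤ p) (h1 : p ≤ Real.exp 1) :
    p * (Real.log p - 1) ≤ 0 := by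
  rcases h0.eq_or_lt with rfl | hp
  · simp
  · refine mul_nonpos_of_nonneg_of_nonpos hp.le (sub_nonpos.2 ?_)
    simpa using Real.log_le_log hp h1

lemma gibbs_cell {η C G q : ℝ} (hη : 0 < η) (hq : 0 ≤ q) :
    C * Real.exp ((G - C) / η)
        + η * (Real.exp ((G - C) / η) * (Real.log (Real.exp ((G - C) / η)) - 1))
        - G * Real.exp ((G - C) / η)
      ≤ C * q + η * (q * (Real.log q - 1)) - G * q := by
  set p := Real.exp ((G - C) / η)
  have h := mul_le_mul_of_nonneg_left (mul_log_sub_le (Real.exp_pos ((G - C) / η)) hq) hη.le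
  have hηlog : η * Real.log p = G - C := by
    rw [Real.log_exp]
    field_simp
  have hq' : η * (q * Real.log p) = q * (G - C) := by rw [← hηlog]; ring
  have hp' : η * (p * Real.log p) = p * (G - C) := by rw [← hηlog]; ring
  nlinarith

-- Tight to about one percent at `x = log 2`, `s = 5/4`, `l = 2`, hence the nine-digit bounds.
lemma entropy_budget {x s l : ℝ} (hx : Real.log 2 ≤ x) (hs : s ≤ 5 / 4) (hl : 2 ≤ l) :
    (1 + x) * s + (1 - Real.exp (-1)) ≤ 2 * l * x := by
  have hlog2 := Real.log_two_gt_d9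
  have hexp : (2.7182818286 : ℝ)⁻¹ < Real.exp (-1) := by
    rw [Real.exp_neg]
    exact inv_strictAnti₀ (Real.exp_pos 1) Real.exp_one_lt_d9
  nlinarith [mul_le_mul_of_nonneg_left hs (by linarith : (0 : ℝ) ≤ 1 + x)]

lemma error_budget {δ δ' l C : ℝ} (hδ : 0 < δ) (hδ2 : δ ≤ 2) (hl : 2 ≤ l) (hC : 1 ≤ C)
    (hδ' : δ' = δ / 2 / (2 * l * C)) : (C + 1) * (l * δ') ≤ δ / 2 ∧ δ' ≤ 1 / 4 := by
  have hlδ' : l * δ' = δ / (4 * C) := by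
    rw [hδ']
    field_simp
    ring
  constructor
  · rw [hlδ', ← mul_div_assoc, div_le_iff₀ (by positivity)]
    nlinarith
  · rw [hδ', div_le_iff₀ (by positivity)]
    nlinarith

lemma mem_SKL {A : Finset (Fin K)} : A ∈ SKL K L ↔ A.Nonempty ∧ #A ≤ L := by
  simp [SKL]

lemma mem_SKLi {i : Fin K} {A : Finset (Fin K)} : A ∈ SKLi K L i ↔ A ∈ SKL K L ∧ i ∈ A := by
  simp [SKLi]

lemma singleton_mem_SKL (hL : 1 ≤ L) (i : Fin K) : {i} ∈ SKL K L :=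
  mem_SKL.2 ⟨singleton_nonempty i, by simpa using hL⟩

lemma sum_SKL_inv_pow_card_le :
    ∑ A ∈ SKL K L, ((K : ℝ)⁻¹) ^ #A ≤ Real.exp 1 - 1 := by
  have hall : ∑ A : Finset (Fin K), ((K : ℝ)⁻¹) ^ #A = (1 + (K : ℝ)⁻¹) ^ K := by
    simpa [powerset_univ, prod_const] using
      (prod_one_add (f := fun _ : Fin K => (K : ℝ)⁻¹) univ).symm
  calc ∑ A ∈ SKL K L, ((K : ℝ)⁻¹) ^ #A ≤ ∑ A ∈ univ.erase ∅, ((K : ℝ)⁻¹) ^ #A :=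
        sum_le_sum_of_subset_of_nonneg
          (fun A hA => mem_erase.2 ⟨(mem_SKL.1 hA).1.ne_empty, mem_univ A⟩)
          fun _ _ _ => by positivity
    _ = (1 + (K : ℝ)⁻¹) ^ K - 1 := by rw [sum_erase_eq_sub (mem_univ _), hall]; simp
    _ ≤ Real.exp 1 - 1 := by linarith [Real.one_add_inv_pow_le_exp (n := K)]

section Marginals

variable {A : Finset (Fin K)}

lemma marg_of_mem {i : Fin K} (hi : i ∈ A) (π : ((j : A) → 𝒳 j.1) → ℝ) (xi : 𝒳 i) :
    marg 𝒳 A π i xi = ∑ x, if x ⟨i, hi⟩ = xi then π x else 0 :=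
  dif_pos hi

lemma marg_nonneg {π : ((j : A) → 𝒳 j.1) → ℝ} (hπ : ∀ x, 0 ≤ π x) (i : Fin K) (xi : 𝒳 i) :
    0 ≤ marg 𝒳 A π i xi := by
  unfold marg
  split_ifs
  exacts [sum_nonneg fun x _ => by split_ifs <;> simp [hπ], le_rfl]

lemma marg_mono {π ρ : ((j : A) → 𝒳 j.1) → ℝ} (h : ∀ x, π x ≤ ρ x) (i : Fin K) (xi : 𝒳 i) :
    marg 𝒳 A π i xi ≤ marg 𝒳 A ρ i xi := by
  unfold marg
  split_ifs
  exacts [sum_le_sum fun x _ => by split_ifs <;> simp [h], le_rfl]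

lemma marg_add (π ρ : ((j : A) → 𝒳 j.1) → ℝ) (i : Fin K) (xi : 𝒳 i) :
    marg 𝒳 A (fun x => π x + ρ x) i xi = marg 𝒳 A π i xi + marg 𝒳 A ρ i xi := by
  unfold marg
  split_ifs
  · rw [← sum_add_distrib]
    exact sum_congr rfl fun x _ => by split_ifs <;> simp
  · simp

lemma marg_mul_left {i : Fin K} (hi : i ∈ A) (w : 𝒳 i → ℝ) (π : ((j : A) → 𝒳 j.1) → ℝ)
    (xi : 𝒳 i) :
    marg 𝒳 A (fun x => w (x ⟨i, hi⟩) * π x) i xi = w xi * marg 𝒳 A π i xi := by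
  rw [marg_of_mem hi, marg_of_mem hi, mul_sum]
  refine sum_congr rfl fun x _ => ?_
  split_ifs with h
  exacts [by rw [h], (mul_zero _).symm]

lemma sum_mul_marg {i : Fin K} (hi : i ∈ A) (w : 𝒳 i → ℝ) (π : ((j : A) → 𝒳 j.1) → ℝ) :
    ∑ xi, w xi * marg 𝒳 A π i xi = ∑ x, w (x ⟨i, hi⟩) * π x := by
  simp only [marg_of_mem hi, mul_ite, mul_zero, mul_sum]
  rw [sum_comm]
  exact sum_congr rfl fun x _ => by rw [sum_ite_eq]; simp

lemma le_marg {π : ((j : A) → 𝒳 j.1) → ℝ} (hπ : ∀ x, 0 ≤ π x) {i : Fin K} (hi : i ∈ A)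
    (x : (j : A) → 𝒳 j.1) : π x ≤ marg 𝒳 A π i (x ⟨i, hi⟩) := by
  rw [marg_of_mem hi]
  refine le_of_eq_of_le (if_pos rfl).symm
    (single_le_sum (f := fun y => if y ⟨i, hi⟩ = x ⟨i, hi⟩ then π y else 0) ?_ (mem_univ x))
  exact fun y _ => by split_ifs <;> simp [hπ]

def singletonEquiv (i : Fin K) : ((j : ({i} : Finset (Fin K))) → 𝒳 j.1) ≃ 𝒳 i :=
  letI : Unique ({i} : Finset (Fin K)) :=
    ⟨⟨⟨i, mem_singleton_self i⟩⟩, fun j => Subtype.ext (mem_singleton.1 j.2)⟩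
  Equiv.piUnique fun j : ({i} : Finset (Fin K)) => 𝒳 j.1

lemma marg_singleton (i : Fin K) (π : ((j : ({i} : Finset (Fin K))) → 𝒳 j.1) → ℝ)
    (xi : 𝒳 i) : marg 𝒳 {i} π i xi = π ((singletonEquiv i).symm xi) := by
  have hev (y : 𝒳 i) : (singletonEquiv i).symm y ⟨i, mem_singleton_self i⟩ = y :=
    (singletonEquiv i).apply_symm_apply y
  rw [marg_of_mem (mem_singleton_self i), ← (singletonEquiv i).symm.sum_comp]
  simp [hev]

end Marginals

section TotalMarginals

variable {π ρ : (A : Finset (Fin K)) → ((j : A) → 𝒳 j.1) → ℝ}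

lemma totMarg_nonneg (hπ : ∀ A x, 0 ≤ π A x) (i : Fin K) (xi : 𝒳 i) :
    0 ≤ totMarg 𝒳 L π i xi :=
  sum_nonneg fun A _ => marg_nonneg (hπ A) i xi

lemma totMarg_add (π ρ : (A : Finset (Fin K)) → ((j : A) → 𝒳 j.1) → ℝ) (i : Fin K) (xi : 𝒳 i) :
    totMarg 𝒳 L (fun A x => π A x + ρ A x) i xi = totMarg 𝒳 L π i xi + totMarg 𝒳 L ρ i xi := by
  simp only [totMarg, marg_add, sum_add_distrib]

lemma le_totMarg (hπ : ∀ A x, 0 ≤ π A x) {A : Finset (Fin K)} (hA : A ∈ SKL K L) {i : Fin K}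
    (hi : i ∈ A) (x : (j : A) → 𝒳 j.1) : π A x ≤ totMarg 𝒳 L π i (x ⟨i, hi⟩) :=
  (le_marg (hπ A) hi x).trans <| single_le_sum (f := fun B => marg 𝒳 B (π B) i (x ⟨i, hi⟩))
    (fun B _ => marg_nonneg (hπ B) i _) (mem_SKLi.2 ⟨hA, hi⟩)

lemma sum_potential_mul_eq (w : (i : Fin K) → 𝒳 i → ℝ)
    (π : (A : Finset (Fin K)) → ((j : A) → 𝒳 j.1) → ℝ) :
    ∑ A ∈ SKL K L, ∑ x : (j : A) → 𝒳 j.1, (∑ j : A, w j (x j)) * π A x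
      = ∑ i, ∑ xi, w i xi * totMarg 𝒳 L π i xi := by
  have hblock (A : Finset (Fin K)) : ∑ x : (j : A) → 𝒳 j.1, (∑ j : A, w j (x j)) * π A x
      = ∑ i ∈ A, ∑ xi, w i xi * marg 𝒳 A (π A) i xi := by
    simp only [sum_mul]
    rw [sum_comm, ← sum_coe_sort A]
    exact sum_congr rfl fun j _ => (sum_mul_marg j.2 (w j) (π A)).symm
  simp only [hblock, totMarg, mul_sum]
  rw [sum_comm' (t' := univ) (s' := SKLi K L) (fun A i => by simp [mem_SKLi])]
  exact sum_congr rfl fun i _ => sum_comm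

lemma sum_card_mul_eq_sum_totMarg (π : (A : Finset (Fin K)) → ((j : A) → 𝒳 j.1) → ℝ) :
    ∑ A ∈ SKL K L, ∑ x : (j : A) → 𝒳 j.1, (#A : ℝ) * π A x = ∑ i, ∑ xi, totMarg 𝒳 L π i xi := by
  simpa using sum_potential_mul_eq (L := L) (fun _ _ => (1 : ℝ)) π

end TotalMarginals

-- Summing over `j : A` avoids transporting `x j : 𝒳 j` to `𝒳 i`.
def singletonFill (d : (i : Fin K) → 𝒳 i → ℝ) (A : Finset (Fin K)) (x : (j : A) → 𝒳 j.1) : ℝ :=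
  ∑ j : A, if A = {j.1} then d j (x j) else 0

section SingletonFill

omit [∀ i, Fintype (𝒳 i)] [∀ i, DecidableEq (𝒳 i)]

variable {d : (i : Fin K) → 𝒳 i → ℝ}

lemma singletonFill_of_ne {A : Finset (Fin K)} (hA : ∀ j, A ≠ {j}) (x : (j : A) → 𝒳 j.1) :
    singletonFill d A x = 0 :=
  sum_eq_zero fun j _ => if_neg (hA j)

lemma singletonFill_singleton (i : Fin K) (x : (j : ({i} : Finset (Fin K))) → 𝒳 j.1) :
    singletonFill d {i} x = d i (singletonEquiv i x) := by
  rw [singletonFill, Fintype.sum_eq_single ⟨i, mem_singleton_self i⟩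
    fun j hj => absurd (Subtype.ext (mem_singleton.1 j.2)) hj, if_pos rfl]
  rfl

lemma singletonFill_nonneg (hd : ∀ i xi, 0 ≤ d i xi) (A : Finset (Fin K))
    (x : (j : A) → 𝒳 j.1) : 0 ≤ singletonFill d A x :=
  sum_nonneg fun j _ => by split_ifs <;> simp [hd]

lemma singletonFill_le {b : ℝ} (hb : 0 ≤ b) (hd : ∀ i xi, d i xi ≤ b) (A : Finset (Fin K))
    (x : (j : A) → 𝒳 j.1) : singletonFill d A x ≤ b := by
  by_cases hA : ∃ i, A = {i}
  · obtain ⟨i, rfl⟩ := hA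
    exact (singletonFill_singleton i x).trans_le (hd i _)
  · push Not at hA
    exact (singletonFill_of_ne hA x).trans_le hb

end SingletonFill

lemma totMarg_singletonFill (hL : 1 ≤ L) (d : (i : Fin K) → 𝒳 i → ℝ) (i : Fin K) (xi : 𝒳 i) :
    totMarg 𝒳 L (singletonFill d) i xi = d i xi := by
  have hblock (A : Finset (Fin K)) (hi : i ∈ A) :
      marg 𝒳 A (singletonFill d A) i xi = if A = {i} then d i xi else 0 := by
    split_ifs with hA
    · subst hA
      rw [marg_singleton, singletonFill_singleton, Equiv.apply_symm_apply]
    · refine (marg_of_mem hi _ xi).trans (sum_eq_zero fun x _ => ?_)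
      rw [singletonFill_of_ne (fun j hj => hA (by subst hj; rw [mem_singleton.1 hi])), ite_self]
  rw [totMarg, sum_congr rfl fun A hA => hblock A (mem_SKLi.1 hA).2, sum_ite_eq',
    if_pos (mem_SKLi.2 ⟨singleton_mem_SKL hL i, mem_singleton_self i⟩)]

section Objective

variable {c : (A : Finset (Fin K)) → ((j : A) → 𝒳 j.1) → ℝ≥0∞}
  {π ρ : (A : Finset (Fin K)) → ((j : A) → 𝒳 j.1) → ℝ}

omit [∀ i, DecidableEq (𝒳 i)]

lemma Fobj_add (π ρ : (A : Finset (Fin K)) → ((j : A) → 𝒳 j.1) → ℝ) :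
    Fobj 𝒳 L c (fun A x => π A x + ρ A x) = Fobj 𝒳 L c π + Fobj 𝒳 L c ρ := by
  simp only [Fobj, mul_add, sum_add_distrib]

lemma Fobj_add_sum_sub_le (hρπ : ∀ A x, ρ A x ≤ π A x) :
    Fobj 𝒳 L c ρ + ∑ A ∈ SKL K L, ∑ x, (π A x - ρ A x) ≤ Fobj 𝒳 L c π := by
  simp only [Fobj, ← sum_add_distrib]
  gcongr with A _ x _
  nlinarith [hρπ A x, (c A x).toReal_nonneg]

lemma le_cmax {A : Finset (Fin K)} (hA : A ∈ SKL K L) {x : (j : A) → 𝒳 j.1} (hx : c A x ≠ ⊤) :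
    1 + (c A x).toReal ≤ cmax 𝒳 L c := by
  refine le_csSup (Set.Finite.bddAbove ?_) ⟨A, hA, x, hx, rfl⟩
  refine (Set.finite_range fun p : (Σ A : Finset (Fin K), (j : A) → 𝒳 j.1) =>
    1 + (c p.1 p.2).toReal).subset ?_
  rintro _ ⟨A, -, x, -, rfl⟩
  exact ⟨⟨A, x⟩, rfl⟩

lemma one_le_cmax (hL : 1 ≤ L)
    (hc : ∀ (i : Fin K) (x : (j : ({i} : Finset (Fin K))) → 𝒳 j.1), c {i} x = 0)
    {i : Fin K} (x0 : 𝒳 i) : 1 ≤ cmax 𝒳 L c := by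
  have hfin : c {i} ((singletonEquiv i).symm x0) ≠ ⊤ := by simp [hc]
  simpa [hc] using le_cmax (singleton_mem_SKL hL i) hfin

lemma Fobj_le_add_cmax_mul (hπ : ∀ A x, c A x = ⊤ → π A x = 0)
    (hρ : ∀ A x, c A x = ⊤ → ρ A x = 0) :
    Fobj 𝒳 L c π ≤ Fobj 𝒳 L c ρ + cmax 𝒳 L c * ∑ A ∈ SKL K L, l1 (fun x => π A x - ρ A x) := by
  simp only [Fobj, l1, mul_sum, ← sum_add_distrib]
  gcongr with A hA x _
  by_cases hx : c A x = ⊤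
  · simp [hπ A x hx, hρ A x hx]
  · have hcmax := le_cmax hA hx
    have h0 : 0 ≤ 1 + (c A x).toReal := by positivity
    nlinarith [le_abs_self (π A x - ρ A x), abs_nonneg (π A x - ρ A x)]

end Objective

lemma Fobj_eq_sum_totMarg {c : (A : Finset (Fin K)) → ((j : A) → 𝒳 j.1) → ℝ≥0∞}
    {π : (A : Finset (Fin K)) → ((j : A) → 𝒳 j.1) → ℝ}
    (hc : ∀ (i : Fin K) (x : (j : ({i} : Finset (Fin K))) → 𝒳 j.1), c {i} x = 0)
    (hπ : ∀ A ∈ SKL K L, 1 < #A → π A = 0) :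
    Fobj 𝒳 L c π = ∑ i, ∑ xi, totMarg 𝒳 L π i xi := by
  rw [← sum_card_mul_eq_sum_totMarg, Fobj]
  refine sum_congr rfl fun A hA => sum_congr rfl fun x _ => ?_
  rcases (one_le_card.2 (mem_SKL.1 hA).1).eq_or_lt with h1 | h1
  · obtain ⟨i, rfl⟩ := card_eq_one.1 h1.symm
    simp [hc]
  · simp [hπ A hA h1]

def shrink (μ ν : (i : Fin K) → 𝒳 i → ℝ) (π : (A : Finset (Fin K)) → ((j : A) → 𝒳 j.1) → ℝ)
    (A : Finset (Fin K)) (x : (j : A) → 𝒳 j.1) : ℝ :=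
  π A x * ∏ j : A, min 1 (ν j (x j) / μ j (x j))

def repair (L : ℕ) (μ ν : (i : Fin K) → 𝒳 i → ℝ)
    (π : (A : Finset (Fin K)) → ((j : A) → 𝒳 j.1) → ℝ) (A : Finset (Fin K))
    (x : (j : A) → 𝒳 j.1) : ℝ :=
  shrink μ ν π A x + singletonFill (fun i xi => ν i xi - totMarg 𝒳 L (shrink μ ν π) i xi) A x

section Repair

variable {μ ν : (i : Fin K) → 𝒳 i → ℝ} {π : (A : Finset (Fin K)) → ((j : A) → 𝒳 j.1) → ℝ}

lemma totMarg_repair (hL : 1 ≤ L) (i : Fin K) (xi : 𝒳 i) :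
    totMarg 𝒳 L (repair L μ ν π) i xi = ν i xi := by
  unfold repair
  rw [totMarg_add, totMarg_singletonFill hL]
  ring

lemma repair_eq_zero_of_top {c : (A : Finset (Fin K)) → ((j : A) → 𝒳 j.1) → ℝ≥0∞}
    (hc : ∀ (i : Fin K) (x : (j : ({i} : Finset (Fin K))) → 𝒳 j.1), c {i} x = 0)
    (hπc : ∀ A x, c A x = ⊤ → π A x = 0) (A : Finset (Fin K)) (x : (j : A) → 𝒳 j.1)
    (hx : c A x = ⊤) : repair L μ ν π A x = 0 := by
  have hA : ∀ j, A ≠ {j} := by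
    rintro j rfl
    simp [hc] at hx
  rw [repair, shrink, hπc A x hx, zero_mul, zero_add, singletonFill_of_ne hA]

variable (hμ : ∀ i xi, 0 < μ i xi) (hν : ∀ i xi, 0 ≤ ν i xi) (hπ : ∀ A x, 0 ≤ π A x)
include hμ hν hπ

omit [∀ i, Fintype (𝒳 i)] [∀ i, DecidableEq (𝒳 i)] in
lemma shrink_nonneg (A : Finset (Fin K)) (x : (j : A) → 𝒳 j.1) : 0 ≤ shrink μ ν π A x :=
  mul_nonneg (hπ A x) (prod_nonneg fun j _ => min_one_div_nonneg (hμ j (x j)) (hν j (x j)))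

omit [∀ i, Fintype (𝒳 i)] [∀ i, DecidableEq (𝒳 i)] in
lemma shrink_le (A : Finset (Fin K)) (x : (j : A) → 𝒳 j.1) : shrink μ ν π A x ≤ π A x :=
  mul_le_of_le_one_right (hπ A x)
    (prod_le_one (fun j _ => min_one_div_nonneg (hμ j (x j)) (hν j (x j))) fun _ _ => min_le_left _ _)

lemma repair_le {b : ℝ} (hb : 0 ≤ b) (hνb : ∀ i xi, ν i xi ≤ b) (A : Finset (Fin K))
    (x : (j : A) → 𝒳 j.1) : repair L μ ν π A x ≤ π A x + b :=
  add_le_add (shrink_le hμ hν hπ A x) <| singletonFill_le hb (fun i xi =>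
    (sub_le_self _ (totMarg_nonneg (shrink_nonneg hμ hν hπ) i xi)).trans (hνb i xi)) A x

variable (hπμ : ∀ i xi, totMarg 𝒳 L π i xi = μ i xi)
include hπμ

lemma totMarg_shrink_le (i : Fin K) (xi : 𝒳 i) :
    totMarg 𝒳 L (shrink μ ν π) i xi ≤ min (μ i xi) (ν i xi) := by
  rw [← min_one_div_mul (hμ i xi)]
  nth_rw 2 [← hπμ]
  rw [totMarg, totMarg, mul_sum]
  refine sum_le_sum fun A hA => ?_
  have hi := (mem_SKLi.1 hA).2
  rw [← marg_mul_left hi (fun y => min 1 (ν i y / μ i y))]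
  refine marg_mono (fun x => ?_) i xi
  rw [shrink, mul_comm]
  exact mul_le_mul_of_nonneg_right
    (prod_le_of_mem (fun (j : A) _ => min_one_div_nonneg (hμ j (x j)) (hν j (x j)))
    (fun _ _ => min_le_left _ _) (mem_univ (⟨i, hi⟩ : A))) (hπ A x)

lemma sum_sub_shrink_le :
    ∑ A ∈ SKL K L, ∑ x, (π A x - shrink μ ν π A x) ≤ ∑ i, l1 (fun xi => μ i xi - ν i xi) := by
  have hcell (A : Finset (Fin K)) (x : (j : A) → 𝒳 j.1) : π A x - shrink μ ν π A x
      ≤ (∑ j : A, (1 - min 1 (ν j (x j) / μ j (x j)))) * π A x := by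
    have := one_sub_sum_le_prod (a := fun j : A => min 1 (ν j (x j) / μ j (x j))) univ
      (fun j _ => min_one_div_nonneg (hμ j (x j)) (hν j (x j))) fun j _ => min_le_left _ _
    rw [shrink]
    nlinarith [hπ A x]
  refine (sum_le_sum fun A _ => sum_le_sum fun x _ => hcell A x).trans ?_
  rw [sum_potential_mul_eq (fun i y => 1 - min 1 (ν i y / μ i y))]
  refine sum_le_sum fun i _ => sum_le_sum fun xi _ => ?_
  rw [hπμ, sub_mul, one_mul, min_one_div_mul (hμ i xi)]
  rcases le_total (μ i xi) (ν i xi) with h | h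
  · simp [min_eq_left h]
  · rw [min_eq_right h]
    exact le_abs_self _

lemma repair_nonneg (A : Finset (Fin K)) (x : (j : A) → 𝒳 j.1) : 0 ≤ repair L μ ν π A x :=
  add_nonneg (shrink_nonneg hμ hν hπ A x) <| singletonFill_nonneg (fun i xi =>
    sub_nonneg.2 <| (totMarg_shrink_le hμ hν hπ hπμ i xi).trans (min_le_right _ _)) A x

lemma Fobj_repair_le (hL : 1 ≤ L) {c : (A : Finset (Fin K)) → ((j : A) → 𝒳 j.1) → ℝ≥0∞}
    (hc : ∀ (i : Fin K) (x : (j : ({i} : Finset (Fin K))) → 𝒳 j.1), c {i} x = 0) :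
    Fobj 𝒳 L c (repair L μ ν π)
      ≤ Fobj 𝒳 L c π + L * ∑ i, l1 (fun xi => μ i xi - ν i xi) := by
  set σ := shrink μ ν π
  set D := ∑ A ∈ SKL K L, ∑ x, (π A x - σ A x)
  have hσπ := shrink_le hμ hν hπ
  have hD0 : 0 ≤ D := sum_nonneg fun A _ => sum_nonneg fun x _ => sub_nonneg.2 (hσπ A x)
  have hDe := sum_sub_shrink_le hμ hν hπ hπμ
  have hFσ : Fobj 𝒳 L c σ + D ≤ Fobj 𝒳 L c π := Fobj_add_sum_sub_le hσπ
  have hFfill : Fobj 𝒳 L c (singletonFill fun i xi => ν i xi - totMarg 𝒳 L σ i xi)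
      = ∑ i, ∑ xi, ν i xi - ∑ i, ∑ xi, totMarg 𝒳 L σ i xi := by
    rw [Fobj_eq_sum_totMarg hc fun A _ hA => funext fun x => singletonFill_of_ne
      (fun j hj => by simp [hj] at hA) x]
    simp only [totMarg_singletonFill hL, sum_sub_distrib]
  have hmass : ∑ i, ∑ xi, μ i xi - ∑ i, ∑ xi, totMarg 𝒳 L σ i xi ≤ L * D := by
    simp only [← hπμ, ← sum_card_mul_eq_sum_totMarg, ← sum_sub_distrib, ← mul_sub, D, mul_sum]
    gcongr with A hA x _
    · exact sub_nonneg.2 (hσπ A x)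
    · exact_mod_cast (mem_SKL.1 hA).2
  have hνμ := sum_sum_sub_le_sum_l1 μ ν
  unfold repair
  rw [Fobj_add, hFfill]
  nlinarith [mul_nonneg (sub_nonneg.2 (Nat.one_le_cast.2 hL : (1 : ℝ) ≤ L)) (sub_nonneg.2 hDe)]

end Repair

def negEntropy (L : ℕ) (π : (A : Finset (Fin K)) → ((j : A) → 𝒳 j.1) → ℝ) : ℝ :=
  ∑ A ∈ SKL K L, ∑ x, π A x * (Real.log (π A x) - 1)

section Entropy

variable {π : (A : Finset (Fin K)) → ((j : A) → 𝒳 j.1) → ℝ}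
  {c : (A : Finset (Fin K)) → ((j : A) → 𝒳 j.1) → ℝ≥0∞} {η : ℝ} {g : (i : Fin K) → 𝒳 i → ℝ}

omit [∀ i, Fintype (𝒳 i)] [∀ i, DecidableEq (𝒳 i)] in
lemma piInd_nonneg (A : Finset (Fin K)) (x : (j : A) → 𝒳 j.1) : 0 ≤ piInd 𝒳 η c g A x := by
  unfold piInd
  split_ifs
  exacts [le_rfl, (Real.exp_pos _).le]

omit [∀ i, Fintype (𝒳 i)] [∀ i, DecidableEq (𝒳 i)] in
lemma piInd_eq_zero_of_top {A : Finset (Fin K)} {x : (j : A) → 𝒳 j.1} (hx : c A x = ⊤) :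
    piInd 𝒳 η c g A x = 0 :=
  if_pos hx

lemma Fobj_add_negEntropy_piInd_le (hη : 0 < η) (hπ : ∀ A x, 0 ≤ π A x)
    (hπc : ∀ A x, c A x = ⊤ → π A x = 0)
    (hmarg : ∀ i xi, totMarg 𝒳 L π i xi = totMarg 𝒳 L (piInd 𝒳 η c g) i xi) :
    Fobj 𝒳 L c (piInd 𝒳 η c g) + η * negEntropy L (piInd 𝒳 η c g)
      ≤ Fobj 𝒳 L c π + η * negEntropy L π := by
  have hsplit (ρ : (A : Finset (Fin K)) → ((j : A) → 𝒳 j.1) → ℝ) :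
      Fobj 𝒳 L c ρ + η * negEntropy L ρ - ∑ i, ∑ xi, g i xi * totMarg 𝒳 L ρ i xi
        = ∑ A ∈ SKL K L, ∑ x, ((1 + (c A x).toReal) * ρ A x
            + η * (ρ A x * (Real.log (ρ A x) - 1)) - (∑ j : A, g j (x j)) * ρ A x) := by
    simp only [← sum_potential_mul_eq, Fobj, negEntropy, mul_sum, sum_add_distrib,
      sum_sub_distrib]
  have hcell (A : Finset (Fin K)) (x : (j : A) → 𝒳 j.1) :
      (1 + (c A x).toReal) * piInd 𝒳 η c g A x
          + η * (piInd 𝒳 η c g A x * (Real.log (piInd 𝒳 η c g A x) - 1))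
          - (∑ j : A, g j (x j)) * piInd 𝒳 η c g A x
        ≤ (1 + (c A x).toReal) * π A x + η * (π A x * (Real.log (π A x) - 1))
          - (∑ j : A, g j (x j)) * π A x := by
    by_cases hx : c A x = ⊤
    · simp [piInd_eq_zero_of_top hx, hπc A x hx]
    · simp only [piInd, if_neg hx]
      exact gibbs_cell hη (hπ A x)
  have := sum_le_sum fun A (_ : A ∈ SKL K L) => sum_le_sum fun x (_ : x ∈ univ) => hcell A x
  rw [← hsplit, ← hsplit] at this
  simp only [hmarg] at this
  linarith

omit [∀ i, DecidableEq (𝒳 i)] in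
lemma negEntropy_nonpos (h0 : ∀ A x, 0 ≤ π A x) (h1 : ∀ A ∈ SKL K L, ∀ x, π A x ≤ Real.exp 1) :
    negEntropy L π ≤ 0 :=
  sum_nonpos fun A hA => sum_nonpos fun x _ => mul_log_sub_one_nonpos (h0 A x) (h1 A hA x)

lemma neg_negEntropy_le {a : ℕ} (ha : ∀ i, Fintype.card (𝒳 i) ≤ a) (hKa : 0 < K * a)
    (hπ : ∀ A x, 0 ≤ π A x) :
    -negEntropy L π ≤ (1 + Real.log (K * a)) * ∑ i, ∑ xi, totMarg 𝒳 L π i xi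
      + (1 - Real.exp (-1)) := by
  set M : ℝ := K * a
  have hK : (0 : ℝ) < K := by exact_mod_cast Nat.pos_of_mul_pos_right hKa
  have ha0 : (0 : ℝ) < a := by exact_mod_cast Nat.pos_of_mul_pos_left hKa
  have hM : 0 < M := mul_pos hK ha0
  have hcell (A : Finset (Fin K)) (hA : A ∈ SKL K L) (x : (j : A) → 𝒳 j.1) :
      -(π A x * (Real.log (π A x) - 1))
        ≤ (1 + Real.log M) * (#A * π A x) + Real.exp (-1) * M⁻¹ ^ #A := by
    have h1 : (1 : ℝ) ≤ #A := by exact_mod_cast one_le_card.2 (mem_SKL.1 hA).1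
    have h := mul_log_sub_le (Real.exp_pos (-(#A * Real.log M) - 1)) (hπ A x)
    have he : Real.exp (-(#A * Real.log M) - 1) = Real.exp (-1) * M⁻¹ ^ #A := by
      rw [← Real.exp_log (inv_pos.2 hM), ← Real.exp_nat_mul, ← Real.exp_add, Real.log_inv]
      ring_nf
    rw [Real.log_exp, he] at h
    nlinarith [mul_le_mul_of_nonneg_right h1 (hπ A x)]
  have hblock (A : Finset (Fin K)) :
      ∑ _x : (j : A) → 𝒳 j.1, Real.exp (-1) * M⁻¹ ^ #A ≤ Real.exp (-1) * (K : ℝ)⁻¹ ^ #A := by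
    have hcard : Fintype.card ((j : A) → 𝒳 j.1) ≤ a ^ #A := by
      rw [Fintype.card_pi, ← Fintype.card_coe A, ← card_univ]
      exact prod_le_pow_card _ _ _ fun j _ => ha j
    have haM : (a : ℝ) * M⁻¹ = (K : ℝ)⁻¹ := by
      rw [show M = K * a from rfl]
      field_simp
    rw [sum_const, card_univ, nsmul_eq_mul, ← haM, mul_pow, mul_left_comm]
    gcongr
    exact_mod_cast hcard
  calc -negEntropy L π = ∑ A ∈ SKL K L, ∑ x, -(π A x * (Real.log (π A x) - 1)) := by
        simp only [negEntropy, sum_neg_distrib]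
    _ ≤ ∑ A ∈ SKL K L, ∑ x, ((1 + Real.log M) * (#A * π A x) + Real.exp (-1) * M⁻¹ ^ #A) :=
        sum_le_sum fun A hA => sum_le_sum fun x _ => hcell A hA x
    _ = (1 + Real.log M) * ∑ A ∈ SKL K L, ∑ x : (j : A) → 𝒳 j.1, (#A : ℝ) * π A x
          + ∑ A ∈ SKL K L, ∑ _x : (j : A) → 𝒳 j.1, Real.exp (-1) * M⁻¹ ^ #A := by
        simp only [sum_add_distrib, mul_sum]
    _ ≤ (1 + Real.log M) * ∑ i, ∑ xi, totMarg 𝒳 L π i xi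
          + Real.exp (-1) * ∑ A ∈ SKL K L, (K : ℝ)⁻¹ ^ #A := by
        rw [sum_card_mul_eq_sum_totMarg, mul_sum _ _ (Real.exp (-1))]
        exact add_le_add_right (sum_le_sum fun A _ => hblock A) _
    _ ≤ (1 + Real.log M) * ∑ i, ∑ xi, totMarg 𝒳 L π i xi + Real.exp (-1) * (Real.exp 1 - 1) := by
        gcongr
        exact sum_SKL_inv_pow_card_le
    _ = (1 + Real.log M) * ∑ i, ∑ xi, totMarg 𝒳 L π i xi + (1 - Real.exp (-1)) := by
        rw [mul_sub, ← Real.exp_add]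
        norm_num

end Entropy

section Rounding

variable {c : (A : Finset (Fin K)) → ((j : A) → 𝒳 j.1) → ℝ≥0∞} {η : ℝ}
  {g μ : (i : Fin K) → 𝒳 i → ℝ} {π π' : (A : Finset (Fin K)) → ((j : A) → 𝒳 j.1) → ℝ}

lemma Fobj_piInd_add_negEntropy_le (hL : 1 ≤ L)
    (hc : ∀ (i : Fin K) (x : (j : ({i} : Finset (Fin K))) → 𝒳 j.1), c {i} x = 0) (hη : 0 < η)
    (hμ : ∀ i xi, 0 < μ i xi) (hμ1 : ∀ i xi, μ i xi ≤ 1) (hπ : Feasible 𝒳 L c μ π)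
    (he : ∑ i, l1 (fun xi => μ i xi - totMarg 𝒳 L (piInd 𝒳 η c g) i xi) ≤ 1 / 2) :
    Fobj 𝒳 L c (piInd 𝒳 η c g) + η * negEntropy L (piInd 𝒳 η c g)
      ≤ Fobj 𝒳 L c π + L * ∑ i, l1 (fun xi => μ i xi - totMarg 𝒳 L (piInd 𝒳 η c g) i xi) := by
  obtain ⟨hπ0, hπc, hπμ⟩ := hπ
  set ν := totMarg 𝒳 L (piInd 𝒳 η c g)
  have hν : ∀ i xi, 0 ≤ ν i xi := totMarg_nonneg piInd_nonneg
  have hρ0 := repair_nonneg hμ hν hπ0 hπμ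
  have hρe : ∀ A ∈ SKL K L, ∀ x, repair L μ ν π A x ≤ Real.exp 1 := by
    intro A hA x
    obtain ⟨i, hi⟩ := (mem_SKL.1 hA).1
    have hπ1 : π A x ≤ 1 := (le_totMarg hπ0 hA hi x).trans ((hπμ i _).trans_le (hμ1 i _))
    have hρ := repair_le (L := L) hμ hν hπ0 (by norm_num : (0 : ℝ) ≤ 3 / 2)
      (fun i xi => (le_add_sum_l1 μ ν i xi).trans (by linarith [hμ1 i xi])) A x
    linarith [Real.exp_one_gt_d9]
  calc Fobj 𝒳 L c (piInd 𝒳 η c g) + η * negEntropy L (piInd 𝒳 η c g)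
      ≤ Fobj 𝒳 L c (repair L μ ν π) + η * negEntropy L (repair L μ ν π) :=
        Fobj_add_negEntropy_piInd_le hη hρ0 (repair_eq_zero_of_top hc hπc) (totMarg_repair hL)
    _ ≤ Fobj 𝒳 L c (repair L μ ν π) :=
        add_le_of_nonpos_right (mul_nonpos_of_nonneg_of_nonpos hη.le (negEntropy_nonpos hρ0 hρe))
    _ ≤ Fobj 𝒳 L c π + L * ∑ i, l1 (fun xi => μ i xi - ν i xi) :=
        Fobj_repair_le hμ hν hπ0 hπμ hL hc

lemma Fobj_eq_of_L_eq_one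
    (hc : ∀ (i : Fin K) (x : (j : ({i} : Finset (Fin K))) → 𝒳 j.1), c {i} x = 0)
    (hπ : ∀ i xi, totMarg 𝒳 1 π i xi = μ i xi) (hπ' : ∀ i xi, totMarg 𝒳 1 π' i xi = μ i xi) :
    Fobj 𝒳 1 c π = Fobj 𝒳 1 c π' := by
  have hsingle : ∀ A ∈ SKL K 1, ¬1 < #A := fun A hA => (mem_SKL.1 hA).2.not_gt
  rw [Fobj_eq_sum_totMarg hc fun A hA h => absurd h (hsingle A hA),
    Fobj_eq_sum_totMarg hc fun A hA h => absurd h (hsingle A hA)]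
  simp only [hπ, hπ']

theorem Fobj_le_of_rounding (hL : 2 ≤ L)
    (hc : ∀ (i : Fin K) (x : (j : ({i} : Finset (Fin K))) → 𝒳 j.1), c {i} x = 0) (hη : 0 < η)
    (hμ : ∀ i xi, 0 < μ i xi) (hmass : ∑ i, ∑ xi, μ i xi = 1)
    (hKa : 2 ≤ K * (univ.sup fun i => Fintype.card (𝒳 i))) (hπ : Feasible 𝒳 L c μ π)
    (hπ'c : ∀ A x, c A x = ⊤ → π' A x = 0)
    (hround : ∑ A ∈ SKL K L, l1 (fun x => π' A x - piInd 𝒳 η c g A x) ≤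
      L * ∑ i, l1 (fun xi => totMarg 𝒳 L (piInd 𝒳 η c g) i xi - μ i xi))
    (he : ∑ i, l1 (fun xi => μ i xi - totMarg 𝒳 L (piInd 𝒳 η c g) i xi) ≤ 1 / 4) :
    Fobj 𝒳 L c π' ≤ Fobj 𝒳 L c π
      + (cmax 𝒳 L c + 1) * (L * ∑ i, l1 (fun xi => μ i xi - totMarg 𝒳 L (piInd 𝒳 η c g) i xi))
      + η * (2 * L * Real.log (K * (univ.sup fun i => Fintype.card (𝒳 i)))) := by
  set ν := totMarg 𝒳 L (piInd 𝒳 η c g)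
  set e := ∑ i, l1 (fun xi => μ i xi - ν i xi)
  have hμ1 : ∀ i xi, μ i xi ≤ 1 := fun i xi =>
    (le_sum_sum_of_nonneg (fun i xi => (hμ i xi).le) i xi).trans_eq hmass
  have hsymm : ∑ i, l1 (fun xi => ν i xi - μ i xi) = e :=
    sum_congr rfl fun i _ => l1_sub_comm _ _
  have hKa' : (2 : ℝ) ≤ K * (univ.sup fun i => Fintype.card (𝒳 i)) := by exact_mod_cast hKa
  have hcmax : 0 ≤ cmax 𝒳 L c := Real.sSup_nonneg fun _ ⟨_, _, _, _, hv⟩ => hv ▸ by positivity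
  have hstep1 : Fobj 𝒳 L c π' ≤ Fobj 𝒳 L c (piInd 𝒳 η c g) + cmax 𝒳 L c * (L * e) :=
    (Fobj_le_add_cmax_mul hπ'c fun A x => piInd_eq_zero_of_top).trans
      (by gcongr; exact hround.trans_eq (by rw [hsymm]))
  have hstep2 : Fobj 𝒳 L c (piInd 𝒳 η c g) + η * negEntropy L (piInd 𝒳 η c g)
      ≤ Fobj 𝒳 L c π + L * e :=
    Fobj_piInd_add_negEntropy_le (by omega) hc hη hμ hμ1 hπ (he.trans (by norm_num))
  have hstep3 : -negEntropy L (piInd 𝒳 η c g)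
      ≤ 2 * L * Real.log (K * (univ.sup fun i => Fintype.card (𝒳 i))) :=
    (neg_negEntropy_le (𝒳 := 𝒳) (fun i => le_sup (f := fun i => Fintype.card (𝒳 i)) (mem_univ i))
      (by omega) piInd_nonneg).trans <| entropy_budget (Real.log_le_log two_pos hKa')
        (by linarith [sum_sum_sub_le_sum_l1 μ ν]) (by exact_mod_cast hL)
  linarith [mul_le_mul_of_nonneg_left hstep3 hη.le]

end Rounding

theorem stmt5_general (K L : ℕ) (hL : 1 ≤ L)
    (𝒳 : Fin K → Type*) [∀ i, Fintype (𝒳 i)] [∀ i, DecidableEq (𝒳 i)]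
    (n : ℝ) (hn : 0 < n)
    (hKn : 2 ≤ K * (Finset.univ.sup fun i : Fin K => Fintype.card (𝒳 i)))
    (δ : ℝ) (hδ : 0 < δ) (hδ2 : δ ≤ 2)
    (c : (A : Finset (Fin K)) → ((j : A) → 𝒳 j.1) → ℝ≥0∞)
    (hc : ∀ (i : Fin K) (x : (j : ({i} : Finset (Fin K))) → 𝒳 j.1), c {i} x = 0)
    (μ : (i : Fin K) → 𝒳 i → ℝ) (hμpos : ∀ i xi, 0 < μ i xi)
    (hmass : ∑ i : Fin K, ∑ xi : 𝒳 i, μ i xi = 1)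
    (η δ' : ℝ)
    (hη : η = (δ / 2) / (2 * L * Real.log (Cstar 𝒳 n * K * n)))
    (hδ' : δ' = (δ / 2) / (2 * L * cmax 𝒳 L c))
    (πstar : (A : Finset (Fin K)) → ((j : A) → 𝒳 j.1) → ℝ)
    (hπstar : Feasible 𝒳 L c μ πstar)
    (g : (i : Fin K) → 𝒳 i → ℝ)
    (hclose : ∑ i : Fin K,
        l1 (fun xi : 𝒳 i => μ i xi - totMarg 𝒳 L (piInd 𝒳 η c g) i xi) ≤ δ')
    (πhat : (A : Finset (Fin K)) → ((j : A) → 𝒳 j.1) → ℝ)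
    (hπhatVan : ∀ A x, c A x = ⊤ → πhat A x = 0)
    (hπhatMarg : ∀ (i : Fin K) (xi : 𝒳 i), totMarg 𝒳 L πhat i xi = μ i xi)
    (hπhatRound : ∑ A ∈ SKL K L, l1 (fun x => πhat A x - piInd 𝒳 η c g A x) ≤
      (L : ℝ) * ∑ i : Fin K,
        l1 (fun xi : 𝒳 i => totMarg 𝒳 L (piInd 𝒳 η c g) i xi - μ i xi)) :
    Fobj 𝒳 L c πhat ≤ Fobj 𝒳 L c πstar + δ := by
  rcases hL.eq_or_lt with rfl | hL2
  · linarith [Fobj_eq_of_L_eq_one hc hπhatMarg hπstar.2.2]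
  obtain ⟨i0, -, hi0⟩ := exists_ne_zero_of_sum_ne_zero (hmass.trans_ne one_ne_zero)
  obtain ⟨x0, -, -⟩ := exists_ne_zero_of_sum_ne_zero hi0
  have hcmax := one_le_cmax hL hc x0
  obtain ⟨hδ'δ, hδ'14⟩ := error_budget hδ hδ2 (by exact_mod_cast hL2) hcmax hδ'
  have hM : Cstar 𝒳 n * K * n = K * (univ.sup fun i => Fintype.card (𝒳 i)) := by
    rw [Cstar]
    field_simp
  have hKa : (2 : ℝ) ≤ K * (univ.sup fun i => Fintype.card (𝒳 i)) := by exact_mod_cast hKn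
  have hlog := Real.log_pos (by linarith : (1 : ℝ) < K * (univ.sup fun i => Fintype.card (𝒳 i)))
  rw [hM] at hη
  have hη0 : 0 < η := by rw [hη]; positivity
  have hηδ : η * (2 * L * Real.log (K * (univ.sup fun i => Fintype.card (𝒳 i)))) = δ / 2 := by
    rw [hη]
    field_simp
  have herr := mul_le_mul_of_nonneg_left (mul_le_mul_of_nonneg_left hclose (Nat.cast_nonneg L))
    (by linarith : 0 ≤ cmax 𝒳 L c + 1)
  linarith [Fobj_le_of_rounding hL2 hc hη0 hμpos hmass hKn hπstar hπhatVan hπhatRound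
    (hclose.trans hδ'14)]

/-- with `η = (δ/2)/(2L log(C*Kn))` and
`δ' = (δ/2)/(2L c_max)`, if the induced couplings `π̃ = π(g)` have total marginal
error at most `δ'` and `π̂` is feasible with
`Σ_A ‖π̂_A − π̃_A‖₁ ≤ L Σᵢ ‖Σ_A Pᵢ#π̃_A − μᵢ‖₁`, then `π̂` is a `δ`-approximate
solution: `F(π̂) ≤ F(π*) + δ` for any minimizer `π*`. -/
theorem stmt5 (K L : ℕ) (hK : 2 ≤ K) (hL : 1 ≤ L) (hLK : L ≤ K)
    (𝒳 : Fin K → Type*) [∀ i, Fintype (𝒳 i)] [∀ i, DecidableEq (𝒳 i)]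
    [∀ i, Nonempty (𝒳 i)]
    (n : ℝ) (hn : 0 < n)
    (hKn : 2 ≤ K * (Finset.univ.sup fun i : Fin K => Fintype.card (𝒳 i)))
    (δ : ℝ) (hδ : 0 < δ) (hδ2 : δ ≤ 2)
    (c : (A : Finset (Fin K)) → ((j : A) → 𝒳 j.1) → ℝ≥0∞)
    (hc : ∀ (i : Fin K) (x : (j : ({i} : Finset (Fin K))) → 𝒳 j.1), c {i} x = 0)
    (μ : (i : Fin K) → 𝒳 i → ℝ) (hμpos : ∀ i xi, 0 < μ i xi)
    (hmass : ∑ i : Fin K, ∑ xi : 𝒳 i, μ i xi = 1)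
    (η δ' : ℝ)
    (hη : η = (δ / 2) / (2 * L * Real.log (Cstar 𝒳 n * K * n)))
    (hδ' : δ' = (δ / 2) / (2 * L * cmax 𝒳 L c))
    (πstar : (A : Finset (Fin K)) → ((j : A) → 𝒳 j.1) → ℝ)
    (hπstar : Feasible 𝒳 L c μ πstar)
    (hπstarOpt : ∀ π, Feasible 𝒳 L c μ π → Fobj 𝒳 L c πstar ≤ Fobj 𝒳 L c π)
    (g : (i : Fin K) → 𝒳 i → ℝ)
    (hclose : ∑ i : Fin K,
        l1 (fun xi : 𝒳 i => μ i xi - totMarg 𝒳 L (piInd 𝒳 η c g) i xi) ≤ δ')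
    (πhat : (A : Finset (Fin K)) → ((j : A) → 𝒳 j.1) → ℝ)
    (hπhatPos : ∀ A x, 0 ≤ πhat A x)
    (hπhatVan : ∀ A x, c A x = ⊤ → πhat A x = 0)
    (hπhatMarg : ∀ (i : Fin K) (xi : 𝒳 i), totMarg 𝒳 L πhat i xi = μ i xi)
    (hπhatRound : ∑ A ∈ SKL K L, l1 (fun x => πhat A x - piInd 𝒳 η c g A x) ≤
      (L : ℝ) * ∑ i : Fin K,
        l1 (fun xi : 𝒳 i => totMarg 𝒳 L (piInd 𝒳 η c g) i xi - μ i xi)) :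
    Fobj 𝒳 L c πhat ≤ Fobj 𝒳 L c πstar + δ :=
  stmt5_general K L hL 𝒳 n hn hKn δ hδ hδ2 c hc μ hμpos hmass η δ' hη hδ' πstar hπstar g hclose πhat
    hπhatVan hπhatMarg hπhatRound
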